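/- arXiv:1504.02279 — 4 statements merged into one kernel-verified Lean document; each statement's English description precedes it below -/
import Mathlib

section
/- Let k ≥ 2 and let H be the quotient of R[B₃] by the relations sᵢᵏ = a_{k−1}sᵢ^{k−1} + ⋯ + a₁sᵢ + a₀ (i = 1,2), where a₀ ∈ R is a unit. There exists a ring automorphism Φ of H (as a ℤ-algebra, twisting the scalars) sending sᵢ ↦ sᵢ⁻¹, aⱼ ↦ −a₀⁻¹a_{k−j} for 1 ≤ j ≤ k−1, and a₀ ↦ a₀⁻¹. -/
/-!
Inverting the generators preserves the braid relation, and if `u ^ k = ∑ aⱼ uʲ` with `a₀` a unit,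
then multiplying by `u⁻ᵏ` and dividing by `a₀` shows that `u⁻¹` satisfies the relation with
coefficients `a₀⁻¹` and `-a₀⁻¹ a_{k-j}`. So the map of `R[B₃]` sending `sᵢ ↦ sᵢ⁻¹` and twisting
the scalars by `a₀ ↦ a₀⁻¹`, `aⱼ ↦ -a₀⁻¹ a_{k-j}` respects the Hecke relations and descends to `H`.
This twist of `R` is an involution, hence so is the induced map of `H`.
-/

/-- The braid relation of `B₃` inside the free group on two generators. -/
def braidRels : Set (FreeGroup (Fin 2)) :=
  {FreeGroup.of 0 * FreeGroup.of 1 * FreeGroup.of 0 *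
    (FreeGroup.of 1 * FreeGroup.of 0 * FreeGroup.of 1)⁻¹}

/-- The braid group on three strands `B₃ = ⟨s₁, s₂ | s₁s₂s₁ = s₂s₁s₂⟩`. -/
def B3 : Type := PresentedGroup braidRels

noncomputable instance : Group B3 := by unfold B3; infer_instance

/-- The generators `s₁, s₂` of `B₃`. -/
noncomputable def σ (i : Fin 2) : B3 := PresentedGroup.of i

/-- The ring `R = ℤ[a_{k-1}, …, a₁, a₀, a₀⁻¹]`, realized as the localization of
`ℤ[a₀, …, a_{k-1}]` away from `a₀` (the variable of index `0`). -/
abbrev Rk (k : ℕ) [NeZero k] : Type :=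
  Localization.Away (MvPolynomial.X (0 : Fin k) : MvPolynomial (Fin k) ℤ)

/-- The coefficient `aⱼ` as an element of `Rk k`. -/
noncomputable def cf (k : ℕ) [NeZero k] (j : Fin k) : Rk k :=
  algebraMap (MvPolynomial (Fin k) ℤ) (Rk k) (MvPolynomial.X j)

/-- The relations `sᵢᵏ = a_{k-1} sᵢ^{k-1} + ⋯ + a₁ sᵢ + a₀` in `Rk[B₃]`. -/
inductive heckeRel (k : ℕ) [NeZero k] :
    MonoidAlgebra (Rk k) B3 → MonoidAlgebra (Rk k) B3 → Prop
  | rel (i : Fin 2) : heckeRel k ((MonoidAlgebra.of (Rk k) B3 (σ i)) ^ k)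
      (∑ j : Fin k, cf k j • (MonoidAlgebra.of (Rk k) B3 (σ i)) ^ (j : ℕ))

/-- The generic Hecke algebra `Hₖ = Rk[B₃]/(sᵢᵏ - Σⱼ aⱼ sᵢʲ : i = 1,2)`. -/
abbrev Hk (k : ℕ) [NeZero k] : Type := RingQuot (heckeRel k)

section ReciprocalCoeffs

variable {R S : Type*} [CommRing R] [CommRing S] {k : ℕ} [NeZero k]

/-- If `u ^ k = ∑ j, a j • u ^ j`, then `u⁻¹` is a root of `-a₀⁻¹ Xᵏ p(X⁻¹) = Xᵏ - ∑ bⱼ Xʲ`, where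
`p = Xᵏ - ∑ aⱼ Xʲ`; these are the `bⱼ`. For `j ≠ 0`, the index `-j : Fin k` is `k - j`. -/
noncomputable def reciprocalCoeffs (a : Fin k → R) (j : Fin k) : R :=
  if j = 0 then Ring.inverse (a 0) else -Ring.inverse (a 0) * a (-j)

lemma map_ringInverse {M₀ N₀ F : Type*} [MonoidWithZero M₀] [MonoidWithZero N₀] [FunLike F M₀ N₀]
    [MonoidHomClass F M₀ N₀] (f : F) {x : M₀} (hx : IsUnit x) :
    f (Ring.inverse x) = Ring.inverse (f x) := by
  obtain ⟨u, rfl⟩ := hx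
  rw [Ring.inverse_unit]
  exact (Ring.inverse_unit (Units.map (f : M₀ →* N₀) u)).symm

lemma map_reciprocalCoeffs (f : R →+* S) {a : Fin k → R} (ha : IsUnit (a 0)) (j : Fin k) :
    f (reciprocalCoeffs a j) = reciprocalCoeffs (f ∘ a) j := by
  unfold reciprocalCoeffs
  split_ifs <;> simp [map_ringInverse f ha]

lemma reciprocalCoeffs_reciprocalCoeffs {a : Fin k → R} (ha : IsUnit (a 0)) :
    reciprocalCoeffs (reciprocalCoeffs a) = a := by
  funext j
  by_cases hj : j = 0
  · subst hj; simp [reciprocalCoeffs, Ring.inverse_inverse ha]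
  · simp only [reciprocalCoeffs, if_neg hj, if_neg (neg_ne_zero.mpr hj), if_true, neg_neg, neg_mul,
      Ring.inverse_inverse ha]
    rw [mul_neg, neg_neg, ← mul_assoc, Ring.mul_inverse_cancel _ ha, one_mul]

lemma Fin.val_neg_of_ne_zero {j : Fin k} (hj : j ≠ 0) : ((-j : Fin k) : ℕ) = k - j := by
  have hj' : (j : ℕ) ≠ 0 := Fin.val_ne_zero_iff.mpr hj
  rw [Fin.val_neg', Nat.mod_eq_of_lt (by omega)]

variable {A : Type*} [Ring A] [Algebra R A]

lemma inv_pow_eq_sum_reciprocalCoeffs {a : Fin k → R} (ha : IsUnit (a 0)) {u : Aˣ}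
    (hu : (u : A) ^ k = ∑ j, a j • (u : A) ^ (j : ℕ)) :
    (↑u⁻¹ : A) ^ k = ∑ j, reciprocalCoeffs a j • (↑u⁻¹ : A) ^ (j : ℕ) := by
  have hshift (j : Fin k) : (u : A) ^ k * (↑u⁻¹ : A) ^ (j : ℕ) = ↑(u ^ (k - j)) := by
    rw [pow_sub u j.isLt.le]
    push_cast
    rfl
  have hsplit : (u : A) ^ k - ∑ j ∈ Finset.univ.erase 0, a j • (u : A) ^ (j : ℕ) = a 0 • 1 := by
    rw [hu, ← Finset.add_sum_erase _ _ (Finset.mem_univ 0)]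
    simp
  rw [← Units.val_pow_eq_pow_val, inv_pow]
  refine Units.inv_eq_of_mul_eq_one_right ?_
  calc (↑(u ^ k) : A) * ∑ j, reciprocalCoeffs a j • (↑u⁻¹ : A) ^ (j : ℕ)
      = ∑ j, reciprocalCoeffs a (-j) • ↑(u ^ (k - ((-j : Fin k) : ℕ))) := by
        rw [Finset.mul_sum]
        exact Fintype.sum_equiv (Equiv.neg (Fin k)) _ _ fun j => by simp [hshift]
    _ = Ring.inverse (a 0) • ((u : A) ^ k - ∑ j ∈ Finset.univ.erase 0, a j • (u : A) ^ (j : ℕ)) := by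
        rw [← Finset.add_sum_erase _ _ (Finset.mem_univ 0), smul_sub, Finset.smul_sum,
          sub_eq_add_neg, ← Finset.sum_neg_distrib]
        congr 1
        · simp [reciprocalCoeffs]
        refine Finset.sum_congr rfl fun j hj => ?_
        have hj : j ≠ 0 := Finset.ne_of_mem_erase hj
        rw [reciprocalCoeffs, if_neg (neg_ne_zero.mpr hj), neg_neg, Fin.val_neg_of_ne_zero hj,
          Nat.sub_sub_self j.isLt.le, neg_mul, neg_smul, mul_smul, Units.val_pow_eq_pow_val]
    _ = 1 := by rw [hsplit, smul_smul, Ring.inverse_mul_cancel _ ha, one_smul]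

end ReciprocalCoeffs

section Coefficients

variable (k : ℕ) [NeZero k]

open MvPolynomial

lemma isUnit_cf_zero : IsUnit (cf k 0) :=
  IsLocalization.Away.algebraMap_isUnit _

noncomputable def coeffTwist : Rk k →+* Rk k :=
  IsLocalization.Away.lift (X 0) (g := eval₂Hom (Int.castRingHom _) (reciprocalCoeffs (cf k)))
    (by simpa [reciprocalCoeffs] using (isUnit_cf_zero k).ringInverse)

lemma coeffTwist_cf (j : Fin k) : coeffTwist k (cf k j) = reciprocalCoeffs (cf k) j := by
  rw [cf, coeffTwist, IsLocalization.Away.lift_eq, eval₂Hom_X']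

lemma coeffTwist_comp_self : (coeffTwist k).comp (coeffTwist k) = RingHom.id (Rk k) := by
  refine IsLocalization.ringHom_ext (Submonoid.powers (X (0 : Fin k) : MvPolynomial (Fin k) ℤ))
    (ringHom_ext' (RingHom.ext_int _ _) fun j => ?_)
  have hcf : coeffTwist k ∘ cf k = reciprocalCoeffs (cf k) := funext (coeffTwist_cf k)
  change coeffTwist k (coeffTwist k (cf k j)) = cf k j
  rw [coeffTwist_cf, map_reciprocalCoeffs _ (isUnit_cf_zero k), hcf,
    reciprocalCoeffs_reciprocalCoeffs (isUnit_cf_zero k)]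

end Coefficients

lemma σ_braid : σ 0 * σ 1 * σ 0 = σ 1 * σ 0 * σ 1 :=
  PresentedGroup.mk_eq_mk_of_mul_inv_mem rfl

noncomputable def invertGenerators : B3 →* B3 :=
  PresentedGroup.toGroup (f := fun i => (σ i)⁻¹) <| by
    rintro _ rfl
    simp only [map_mul, map_inv, FreeGroup.lift_apply_of, mul_inv_eq_one]
    simpa [mul_assoc] using congrArg (·⁻¹) σ_braid

lemma invertGenerators_σ (i : Fin 2) : invertGenerators (σ i) = (σ i)⁻¹ :=
  PresentedGroup.toGroup.of _

lemma invertGenerators_invertGenerators (g : B3) : invertGenerators (invertGenerators g) = g := by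
  suffices invertGenerators.comp invertGenerators = MonoidHom.id B3 from DFunLike.congr_fun this g
  refine PresentedGroup.ext fun i => ?_
  change invertGenerators (invertGenerators (σ i)) = σ i
  rw [invertGenerators_σ, map_inv, invertGenerators_σ, inv_inv]

lemma RingQuot.mkRingHom_smul {S A : Type*} [CommSemiring S] [Semiring A] [Algebra S A]
    (s : A → A → Prop) (r : S) (x : A) : mkRingHom s (r • x) = r • mkRingHom s x := by
  rw [← mkAlgHom_coe S s]
  exact map_smul (mkAlgHom S s) r x

section HeckeAlgebra

variable (k : ℕ) [NeZero k]

open MonoidAlgebra RingQuot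

noncomputable def twistInvert : MonoidAlgebra (Rk k) B3 →+* MonoidAlgebra (Rk k) B3 :=
  (mapRingHom B3 (coeffTwist k)).comp (mapDomainRingHom (Rk k) invertGenerators)

lemma twistInvert_single (g : B3) (r : Rk k) :
    twistInvert k (single g r) = single (invertGenerators g) (coeffTwist k r) := by
  simp [twistInvert]

lemma twistInvert_of (g : B3) :
    twistInvert k (of (Rk k) B3 g) = of (Rk k) B3 (invertGenerators g) := by
  simp [twistInvert_single]

lemma twistInvert_smul (r : Rk k) (x : MonoidAlgebra (Rk k) B3) :
    twistInvert k (r • x) = coeffTwist k r • twistInvert k x := by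
  rw [Algebra.smul_def, map_mul, Algebra.smul_def]
  congr 1
  simp [coe_algebraMap, twistInvert_single]

lemma twistInvert_twistInvert (x : MonoidAlgebra (Rk k) B3) :
    twistInvert k (twistInvert k x) = x := by
  suffices (twistInvert k).comp (twistInvert k) = RingHom.id _ from RingHom.congr_fun this x
  refine ringHom_ext (fun r => ?_) fun g => ?_ <;>
    simp [twistInvert_single, invertGenerators_invertGenerators, ← RingHom.comp_apply,
      coeffTwist_comp_self]

noncomputable def heckeUnit (g : B3) : (Hk k)ˣ :=
  Units.map ((mkRingHom (heckeRel k) : MonoidAlgebra (Rk k) B3 →* Hk k).comp (of (Rk k) B3))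
    (toUnits g)

lemma heckeUnit_val (g : B3) : (heckeUnit k g : Hk k) = mkRingHom (heckeRel k) (of _ _ g) :=
  rfl

lemma heckeUnit_inv (g : B3) :
    (↑(heckeUnit k g)⁻¹ : Hk k) = mkRingHom (heckeRel k) (of _ _ g⁻¹) :=
  rfl

lemma heckeUnit_σ_pow (i : Fin 2) :
    (heckeUnit k (σ i) : Hk k) ^ k = ∑ j, cf k j • (heckeUnit k (σ i) : Hk k) ^ (j : ℕ) := by
  simpa only [heckeUnit_val, map_pow, map_sum, mkRingHom_smul] using
    mkRingHom_rel (heckeRel.rel (k := k) i)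

lemma mkRingHom_twistInvert_rel ⦃x y : MonoidAlgebra (Rk k) B3⦄ (h : heckeRel k x y) :
    mkRingHom (heckeRel k) (twistInvert k x) = mkRingHom (heckeRel k) (twistInvert k y) := by
  obtain ⟨i⟩ := h
  have h := inv_pow_eq_sum_reciprocalCoeffs (A := Hk k) (isUnit_cf_zero k) (heckeUnit_σ_pow k i)
  simp only [heckeUnit_inv] at h
  simpa only [map_pow, map_sum, twistInvert_smul, twistInvert_of, invertGenerators_σ,
    mkRingHom_smul, coeffTwist_cf] using h

noncomputable def heckeInvolution : Hk k →+* Hk k :=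
  lift ⟨(mkRingHom (heckeRel k)).comp (twistInvert k), mkRingHom_twistInvert_rel k⟩

lemma heckeInvolution_mkRingHom (x : MonoidAlgebra (Rk k) B3) :
    heckeInvolution k (mkRingHom (heckeRel k) x) = mkRingHom (heckeRel k) (twistInvert k x) :=
  lift_mkRingHom_apply _ (mkRingHom_twistInvert_rel k) x

lemma heckeInvolution_comp_self :
    (heckeInvolution k).comp (heckeInvolution k) = RingHom.id (Hk k) :=
  ringQuot_ext _ _ <| RingHom.ext fun x => by
    simp [heckeInvolution_mkRingHom, twistInvert_twistInvert]

lemma heckeInvolution_algebraMap (r : Rk k) :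
    heckeInvolution k (algebraMap (Rk k) (Hk k) r) = algebraMap (Rk k) (Hk k) (coeffTwist k r) := by
  rw [Algebra.algebraMap_eq_smul_one, ← map_one (mkRingHom (heckeRel k)), ← mkRingHom_smul,
    heckeInvolution_mkRingHom, twistInvert_smul, map_one, mkRingHom_smul, map_one,
    Algebra.algebraMap_eq_smul_one]

end HeckeAlgebra

/-- There is a ring automorphism `Φ` of `Hₖ` (a `ℤ`-algebra automorphism, twisting the
scalars) with `Φ(sᵢ) = sᵢ⁻¹`, `Φ(aⱼ) = -a₀⁻¹ a_{k-j}` for `1 ≤ j ≤ k-1`, and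
`Φ(a₀) = a₀⁻¹`. -/
theorem hecke_automorphism (k : ℕ) [NeZero k] (hk : 2 ≤ k) :
    ∃ Φ : Hk k ≃+* Hk k,
      (∀ i : Fin 2,
        Φ (RingQuot.mkRingHom (heckeRel k) (MonoidAlgebra.of (Rk k) B3 (σ i))) =
          RingQuot.mkRingHom (heckeRel k) (MonoidAlgebra.of (Rk k) B3 (σ i)⁻¹)) ∧
      (∀ j : Fin k, ∀ hj : j.val ≠ 0,
        Φ (algebraMap (Rk k) (Hk k) (cf k j)) =
          algebraMap (Rk k) (Hk k)
            (-(Ring.inverse (cf k ⟨0, by omega⟩)) *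
              cf k ⟨k - j.val, by have := j.isLt; omega⟩)) ∧
      Φ (algebraMap (Rk k) (Hk k) (cf k ⟨0, by omega⟩)) =
        algebraMap (Rk k) (Hk k) (Ring.inverse (cf k ⟨0, by omega⟩)) := by
  have hΦ := heckeInvolution_comp_self k
  have h0 : (⟨0, by omega⟩ : Fin k) = 0 := rfl
  refine ⟨.ofRingHom _ _ hΦ hΦ, fun i => ?_, fun j hj => ?_, ?_⟩
  · change heckeInvolution k _ = _
    rw [heckeInvolution_mkRingHom, twistInvert_of, invertGenerators_σ]
  · have hj' : j ≠ 0 := Fin.val_ne_zero_iff.mp hj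
    have hneg : (⟨k - j.val, by omega⟩ : Fin k) = -j := Fin.ext (Fin.val_neg_of_ne_zero hj').symm
    simp [heckeInvolution_algebraMap, coeffTwist_cf, reciprocalCoeffs, hj', h0, hneg]
  · simp [heckeInvolution_algebraMap, coeffTwist_cf, reciprocalCoeffs, h0]
end

section
/- Let K be a field and A, B ∈ GL₂(K) with ABA = BAB. If A = [[λ₁, λ₁],[0, λ₂]] and B = [[λ₂, 0],[−λ₂, λ₁]] for λ₁, λ₂ ∈ Kˣ, then ABA = BAB holds; moreover the representation s₁ ↦ A, s₂ ↦ B of B₃ is irreducible if and only if λ₁² − λ₁λ₂ + λ₂² ≠ 0. -/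
theorem dim_two_rep_irreducible_iff {K : Type*} [Field K] (lam₁ lam₂ : K)
    (h₁ : lam₁ ≠ 0) (h₂ : lam₂ ≠ 0)
    (A B : Matrix (Fin 2) (Fin 2) K)
    (hA : A = !![lam₁, lam₁; 0, lam₂])
    (hB : B = !![lam₂, 0; -lam₂, lam₁]) :
    A * B * A = B * A * B ∧
    ((∀ W : Submodule K (Fin 2 → K),
        (∀ v ∈ W, A.mulVec v ∈ W) → (∀ v ∈ W, B.mulVec v ∈ W) →
        W = ⊥ ∨ W = ⊤) ↔ lam₁ ^ 2 - lam₁ * lam₂ + lam₂ ^ 2 ≠ 0) := by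
  subst hA hB
  constructor
  · ext i j
    fin_cases i <;> fin_cases j <;>
      simp [Matrix.mul_apply, Fin.sum_univ_two] <;> ring
  constructor
  · -- irreducible → c ≠ 0
    intro hirr hc
    set v : Fin 2 → K := ![lam₁, lam₂ - lam₁] with hv
    have hAv : (!![lam₁, lam₁; 0, lam₂]).mulVec v = lam₂ • v := by
      funext i; fin_cases i <;>
        simp [hv, Matrix.mulVec, dotProduct, Fin.sum_univ_two] <;> ring
    have hBv : (!![lam₂, 0; -lam₂, lam₁]).mulVec v = lam₂ • v := by
      funext i; fin_cases i <;>
        simp [hv, Matrix.mulVec, dotProduct, Fin.sum_univ_two]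
      linear_combination -hc
    set W : Submodule K (Fin 2 → K) := Submodule.span K {v} with hW
    have hvW : v ∈ W := Submodule.mem_span_singleton_self v
    have hAW : ∀ w ∈ W, (!![lam₁, lam₁; 0, lam₂]).mulVec w ∈ W := by
      intro w hw
      obtain ⟨c, rfl⟩ := Submodule.mem_span_singleton.mp hw
      rw [Matrix.mulVec_smul, hAv]
      exact Submodule.smul_mem _ _ (Submodule.smul_mem _ _ hvW)
    have hBW : ∀ w ∈ W, (!![lam₂, 0; -lam₂, lam₁]).mulVec w ∈ W := by
      intro w hw
      obtain ⟨c, rfl⟩ := Submodule.mem_span_singleton.mp hw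
      rw [Matrix.mulVec_smul, hBv]
      exact Submodule.smul_mem _ _ (Submodule.smul_mem _ _ hvW)
    rcases hirr W hAW hBW with h | h
    · rw [h, Submodule.mem_bot] at hvW
      exact h₁ (by simpa [hv] using congrFun hvW 0)
    · have : (![0, 1] : Fin 2 → K) ∈ W := h ▸ Submodule.mem_top
      obtain ⟨c, hcv⟩ := Submodule.mem_span_singleton.mp this
      have h0 : c * lam₁ = 0 := by simpa [hv] using congrFun hcv 0
      have hc0 : c = 0 := by
        rcases mul_eq_zero.mp h0 with h | h
        · exact h
        · exact absurd h h₁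
      have h1 : c * (lam₂ - lam₁) = 1 := by simpa [hv] using congrFun hcv 1
      rw [hc0, zero_mul] at h1
      exact zero_ne_one h1
  · -- c ≠ 0 → irreducible
    intro hc W hAW hBW
    by_cases hbot : W = ⊥
    · exact Or.inl hbot
    right
    obtain ⟨v, hvW, hv0⟩ := Submodule.exists_mem_ne_zero_of_ne_bot hbot
    -- helper : if ![1,0] ∈ W and ![0,1] ∈ W then W = ⊤
    have top_of : (![1, 0] : Fin 2 → K) ∈ W → (![0, 1] : Fin 2 → K) ∈ W → W = ⊤ := by
      intro he0 he1
      apply Submodule.eq_top_iff'.mpr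
      intro u
      have hu : u = u 0 • ![1, 0] + u 1 • ![0, 1] := by
        funext i; fin_cases i <;> simp
      rw [hu]
      exact Submodule.add_mem _ (Submodule.smul_mem _ _ he0) (Submodule.smul_mem _ _ he1)
    set a : K := (lam₁ - lam₂) * v 0 + lam₁ * v 1 with ha
    set b : K := -lam₂ * v 0 + (lam₁ - lam₂) * v 1 with hb
    have hmemA : (![a, 0] : Fin 2 → K) ∈ W := by
      have := Submodule.sub_mem W (hAW v hvW) (Submodule.smul_mem W lam₂ hvW)
      convert this using 1
      funext i; fin_cases i <;>
        simp [ha, Matrix.mulVec, dotProduct, Fin.sum_univ_two] <;> ring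
    have hmemB : (![0, b] : Fin 2 → K) ∈ W := by
      have := Submodule.sub_mem W (hBW v hvW) (Submodule.smul_mem W lam₂ hvW)
      convert this using 1
      funext i; fin_cases i <;>
        simp [hb, Matrix.mulVec, dotProduct, Fin.sum_univ_two] <;> ring
    have hab : a ≠ 0 ∨ b ≠ 0 := by
      by_contra h
      push_neg at h
      obtain ⟨ha0, hb0⟩ := h
      have hx : (lam₁ ^ 2 - lam₁ * lam₂ + lam₂ ^ 2) * v 0 = 0 := by
        linear_combination (lam₁ - lam₂) * ha0 - lam₁ * hb0
      have hy : (lam₁ ^ 2 - lam₁ * lam₂ + lam₂ ^ 2) * v 1 = 0 := by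
        linear_combination lam₂ * ha0 + (lam₁ - lam₂) * hb0
      have hx0 : v 0 = 0 := by
        rcases mul_eq_zero.mp hx with h | h
        · exact absurd h hc
        · exact h
      have hy0 : v 1 = 0 := by
        rcases mul_eq_zero.mp hy with h | h
        · exact absurd h hc
        · exact h
      apply hv0
      funext i; fin_cases i
      · exact hx0
      · exact hy0
    -- from e0 ∈ W we get e1 ∈ W, and conversely
    have e1_of_e0 : (![1, 0] : Fin 2 → K) ∈ W → (![0, 1] : Fin 2 → K) ∈ W := by
      intro he0
      have hB0 := hBW _ he0
      have := Submodule.sub_mem W (Submodule.smul_mem W lam₂ he0) hB0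
      have heq : (lam₂⁻¹ * lam₂) •
          (![0, 1] : Fin 2 → K) ∈ W := by
        rw [mul_smul]
        apply Submodule.smul_mem
        convert this using 1
        funext i; fin_cases i <;>
          simp [Matrix.mulVec, dotProduct, Fin.sum_univ_two] <;> ring
      rwa [inv_mul_cancel₀ h₂, one_smul] at heq
    have e0_of_e1 : (![0, 1] : Fin 2 → K) ∈ W → (![1, 0] : Fin 2 → K) ∈ W := by
      intro he1
      have hA1 := hAW _ he1
      have := Submodule.sub_mem W hA1 (Submodule.smul_mem W lam₂ he1)
      have heq : (lam₁⁻¹ * lam₁) • (![1, 0] : Fin 2 → K) ∈ W := by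
        rw [mul_smul]
        apply Submodule.smul_mem
        convert this using 1
        funext i; fin_cases i <;>
          simp [Matrix.mulVec, dotProduct, Fin.sum_univ_two] <;> ring
      rwa [inv_mul_cancel₀ h₁, one_smul] at heq
    rcases hab with ha0 | hb0
    · have he0 : (![1, 0] : Fin 2 → K) ∈ W := by
        have heq : (a⁻¹ * a) • (![1, 0] : Fin 2 → K) ∈ W := by
          rw [mul_smul]
          apply Submodule.smul_mem
          convert hmemA using 1
          funext i; fin_cases i <;> simp
        rwa [inv_mul_cancel₀ ha0, one_smul] at heq
      exact top_of he0 (e1_of_e0 he0)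
    · have he1 : (![0, 1] : Fin 2 → K) ∈ W := by
        have heq : (b⁻¹ * b) • (![0, 1] : Fin 2 → K) ∈ W := by
          rw [mul_smul]
          apply Submodule.smul_mem
          convert hmemB using 1
          funext i; fin_cases i <;> simp
        rwa [inv_mul_cancel₀ hb0, one_smul] at heq
      exact top_of (e0_of_e1 he1) he1
end

section
/- Let K be a field, let λ₁, λ₂, λ₃ ∈ Kˣ, and let A, B be the 3×3 matrices A = [[λ₃,0,0],[λ₁λ₃+λ₂², λ₂, 0],[λ₂, 1, λ₁]], B = [[λ₁, −1, λ₂],[0, λ₂, −λ₁λ₃−λ₂²],[0,0,λ₃]]. If (λ₁²+λ₂λ₃)(λ₂²+λ₁λ₃)(λ₃²+λ₁λ₂) ≠ 0 then the representation of B₃ given by s₁ ↦ A, s₂ ↦ B is irreducible. -/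
set_option maxHeartbeats 1000000 in
theorem dim_three_rep_irreducible {K : Type*} [Field K] (lam₁ lam₂ lam₃ : K)
    (h₁ : lam₁ ≠ 0) (h₂ : lam₂ ≠ 0) (h₃ : lam₃ ≠ 0)
    (A B : Matrix (Fin 3) (Fin 3) K)
    (hA : A = !![lam₃, 0, 0; lam₁ * lam₃ + lam₂ ^ 2, lam₂, 0; lam₂, 1, lam₁])
    (hB : B = !![lam₁, -1, lam₂; 0, lam₂, -(lam₁ * lam₃) - lam₂ ^ 2; 0, 0, lam₃])
    (hschur : (lam₁ ^ 2 + lam₂ * lam₃) * (lam₂ ^ 2 + lam₁ * lam₃) *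
        (lam₃ ^ 2 + lam₁ * lam₂) ≠ 0) :
    ∀ W : Submodule K (Fin 3 → K),
      (∀ v ∈ W, A.mulVec v ∈ W) → (∀ v ∈ W, B.mulVec v ∈ W) →
      W = ⊥ ∨ W = ⊤ := by
  subst hA hB
  intro W hWA hWB
  by_cases hbot : W = ⊥
  · exact Or.inl hbot
  right
  have hf1 : lam₁ ^ 2 + lam₂ * lam₃ ≠ 0 := fun h => hschur (by rw [h]; ring)
  have hf2 : lam₂ ^ 2 + lam₁ * lam₃ ≠ 0 := fun h => hschur (by rw [h]; ring)
  have hf3 : lam₃ ^ 2 + lam₁ * lam₂ ≠ 0 := fun h => hschur (by rw [h]; ring)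
  have hd : lam₁ * lam₃ + lam₂ ^ 2 ≠ 0 := fun h => hf2 (by linear_combination h)
  have mem_of_eq : ∀ {w₁ w₂ : Fin 3 → K}, w₁ ∈ W → w₂ = w₁ → w₂ ∈ W :=
    fun h e => e ▸ h
  -- explicit mulVec formulas
  have hmulA : ∀ x y z : K,
      (!![lam₃, 0, 0; lam₁ * lam₃ + lam₂ ^ 2, lam₂, 0; lam₂, 1, lam₁]).mulVec ![x, y, z]
        = ![lam₃ * x, (lam₁ * lam₃ + lam₂ ^ 2) * x + lam₂ * y, lam₂ * x + y + lam₁ * z] := by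
    intro x y z
    funext i
    fin_cases i <;> simp [Matrix.mulVec, dotProduct, Fin.sum_univ_three] <;> try ring
  have hmulB : ∀ x y z : K,
      (!![lam₁, -1, lam₂; 0, lam₂, -(lam₁ * lam₃) - lam₂ ^ 2; 0, 0, lam₃]).mulVec ![x, y, z]
        = ![lam₁ * x - y + lam₂ * z, lam₂ * y - (lam₁ * lam₃ + lam₂ ^ 2) * z, lam₃ * z] := by
    intro x y z
    funext i
    fin_cases i <;> simp [Matrix.mulVec, dotProduct, Fin.sum_univ_three] <;> try ring
  -- the rank-one projection (B - lam₂)(B - lam₃) sends ![x,y,z] into the line K·e₀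
  have hQ : ∀ x y z : K, (![x, y, z] : Fin 3 → K) ∈ W →
      (![(lam₁ ^ 2 - lam₁ * lam₂ - lam₁ * lam₃ + lam₂ * lam₃) * x + (-lam₁ + lam₃) * y + (lam₁ * lam₂ + lam₁ * lam₃) * z, 0, 0] : Fin 3 → K) ∈ W := by
    intro x y z h
    have h1 : (![lam₁ * x - y + lam₂ * z, lam₂ * y - (lam₁ * lam₃ + lam₂ ^ 2) * z, lam₃ * z] : Fin 3 → K) ∈ W :=
      hmulB x y z ▸ hWB _ h
    have h2 := hmulB (lam₁ * x - y + lam₂ * z) (lam₂ * y - (lam₁ * lam₃ + lam₂ ^ 2) * z) (lam₃ * z) ▸ hWB _ h1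
    have h3 := W.add_mem (W.sub_mem h2 (W.smul_mem (lam₂ + lam₃) h1))
      (W.smul_mem (lam₂ * lam₃) h)
    refine mem_of_eq h3 ?_
    funext i
    fin_cases i <;> simp <;> try ring
  -- if e₀ ∈ W (up to a nonzero scalar) then W = ⊤
  have htop : ∀ s : K, s ≠ 0 → (![s, 0, 0] : Fin 3 → K) ∈ W → W = ⊤ := by
    intro s hs hmem
    have he0 : (![1, 0, 0] : Fin 3 → K) ∈ W := by
      refine mem_of_eq (W.smul_mem s⁻¹ hmem) ?_
      funext i
      fin_cases i <;> simp <;> field_simp <;> try ring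
    have t1 : (![0, lam₁ * lam₃ + lam₂ ^ 2, lam₂] : Fin 3 → K) ∈ W := by
      have h1 : (![lam₃ * 1, (lam₁ * lam₃ + lam₂ ^ 2) * 1 + lam₂ * 0,
          lam₂ * 1 + 0 + lam₁ * 0] : Fin 3 → K) ∈ W := hmulA 1 0 0 ▸ hWA _ he0
      refine mem_of_eq (W.sub_mem h1 (W.smul_mem lam₃ he0)) ?_
      funext i
      fin_cases i <;> simp <;> try ring
    have t2 : (![0, 0, lam₂ * lam₃] : Fin 3 → K) ∈ W := by
      have h1 := hmulB 0 (lam₁ * lam₃ + lam₂ ^ 2) lam₂ ▸ hWB _ t1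
      refine mem_of_eq (W.add_mem h1 (W.smul_mem (lam₁ * lam₃) he0)) ?_
      funext i
      fin_cases i <;> simp <;> try ring
    have he2 : (![0, 0, 1] : Fin 3 → K) ∈ W := by
      refine mem_of_eq (W.smul_mem (lam₂ * lam₃)⁻¹ t2) ?_
      funext i
      fin_cases i <;> simp <;> field_simp <;> try ring
    have t3 : (![0, lam₁ * lam₃ + lam₂ ^ 2, 0] : Fin 3 → K) ∈ W := by
      have h1 := hmulB 0 0 1 ▸ hWB _ he2
      refine mem_of_eq (W.sub_mem (W.add_mem (W.smul_mem lam₃ he2)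
        (W.smul_mem lam₂ he0)) h1) ?_
      funext i
      fin_cases i <;> simp <;> try ring
    have he1 : (![0, 1, 0] : Fin 3 → K) ∈ W := by
      refine mem_of_eq (W.smul_mem (lam₁ * lam₃ + lam₂ ^ 2)⁻¹ t3) ?_
      funext i
      fin_cases i <;> simp <;> field_simp <;> try ring
    rw [eq_top_iff]
    intro u _
    have hu : u = u 0 • ![1, 0, 0] + u 1 • ![0, 1, 0] + u 2 • ![0, 0, 1] := by
      funext i
      fin_cases i <;> simp
    rw [hu]
    exact W.add_mem (W.add_mem (W.smul_mem _ he0) (W.smul_mem _ he1)) (W.smul_mem _ he2)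
  obtain ⟨v, hvW, hv0⟩ := (Submodule.ne_bot_iff W).mp hbot
  have hveq : v = ![v 0, v 1, v 2] := by
    funext i
    fin_cases i <;> rfl
  set x := v 0 with hxdef
  set y := v 1 with hydef
  set z := v 2 with hzdef
  have hv3 : (![x, y, z] : Fin 3 → K) ∈ W := hveq ▸ hvW
  -- the three vectors in W ∩ K·e₀
  have w0 : (![(lam₁ ^ 2 - lam₁ * lam₂ - lam₁ * lam₃ + lam₂ * lam₃) * x + (-lam₁ + lam₃) * y + (lam₁ * lam₂ + lam₁ * lam₃) * z, 0, 0] : Fin 3 → K) ∈ W := hQ x y z hv3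
  have mA : (![lam₃ * x, (lam₁ * lam₃ + lam₂ ^ 2) * x + lam₂ * y, lam₂ * x + y + lam₁ * z] : Fin 3 → K) ∈ W :=
    hmulA x y z ▸ hWA _ hv3
  have w1' := hQ _ _ _ mA
  have w1 : (![(lam₂ ^ 2 * lam₃ + lam₂ * lam₃ ^ 2) * x + (lam₁ * lam₃ + lam₂ * lam₃) * y + (lam₁ ^ 2 * lam₂ + lam₁ ^ 2 * lam₃) * z, 0, 0] : Fin 3 → K) ∈ W := by
    refine mem_of_eq w1' ?_
    funext i
    fin_cases i <;> simp <;> try ring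
  have mB : (![lam₁ * x - y + lam₂ * z, lam₂ * y - (lam₁ * lam₃ + lam₂ ^ 2) * z, lam₃ * z] : Fin 3 → K) ∈ W :=
    hmulB x y z ▸ hWB _ hv3
  have mAB : (!![lam₃, 0, 0; lam₁ * lam₃ + lam₂ ^ 2, lam₂, 0; lam₂, 1, lam₁]).mulVec
      (![lam₁ * x - y + lam₂ * z, lam₂ * y - (lam₁ * lam₃ + lam₂ ^ 2) * z, lam₃ * z] : Fin 3 → K) ∈ W := hWA _ mB
  rw [hmulA] at mAB
  have w2' := hQ _ _ _ mAB
  have w2 : (![(lam₁ * lam₂ ^ 2 * lam₃ + lam₁ * lam₂ * lam₃ ^ 2) * x + (lam₁ * lam₂ * lam₃ - lam₂ * lam₃ ^ 2) * y + (lam₁ ^ 2 * lam₂ * lam₃ - lam₁ * lam₂ ^ 2 * lam₃ - lam₁ * lam₂ * lam₃ ^ 2 + lam₂ ^ 2 * lam₃ ^ 2) * z, 0, 0] : Fin 3 → K) ∈ W := by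
    refine mem_of_eq w2' ?_
    funext i
    fin_cases i <;> simp <;> try ring
  by_cases c0 : (lam₁ ^ 2 - lam₁ * lam₂ - lam₁ * lam₃ + lam₂ * lam₃) * x + (-lam₁ + lam₃) * y + (lam₁ * lam₂ + lam₁ * lam₃) * z = 0
  · by_cases c1 : (lam₂ ^ 2 * lam₃ + lam₂ * lam₃ ^ 2) * x + (lam₁ * lam₃ + lam₂ * lam₃) * y + (lam₁ ^ 2 * lam₂ + lam₁ ^ 2 * lam₃) * z = 0
    · by_cases c2 : (lam₁ * lam₂ ^ 2 * lam₃ + lam₁ * lam₂ * lam₃ ^ 2) * x + (lam₁ * lam₂ * lam₃ - lam₂ * lam₃ ^ 2) * y + (lam₁ ^ 2 * lam₂ * lam₃ - lam₁ * lam₂ ^ 2 * lam₃ - lam₁ * lam₂ * lam₃ ^ 2 + lam₂ ^ 2 * lam₃ ^ 2) * z = 0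
      · exfalso
        apply hv0
        have hdet : lam₂ * lam₃ * (lam₁ ^ 2 + lam₂ * lam₃) ^ 2 * (lam₃ ^ 2 + lam₁ * lam₂) ≠ 0 :=
          mul_ne_zero (mul_ne_zero (mul_ne_zero h₂ h₃) (pow_ne_zero 2 hf1)) hf3
        have hx0 : x = 0 := by
          refine mul_left_cancel₀ hdet ?_
          linear_combination (lam₁ ^ 3 * lam₂ ^ 2 * lam₃ - lam₁ ^ 2 * lam₂ ^ 2 * lam₃ ^ 2 + lam₁ * lam₂ ^ 3 * lam₃ ^ 2 - lam₂ ^ 3 * lam₃ ^ 3) * c0 +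
              (-lam₁ ^ 3 * lam₂ * lam₃ + lam₁ ^ 2 * lam₂ * lam₃ ^ 2 - lam₁ * lam₂ ^ 2 * lam₃ ^ 2 + lam₂ ^ 2 * lam₃ ^ 3) * c1 + (lam₁ ^ 3 * lam₂ + lam₁ ^ 3 * lam₃ + lam₁ * lam₂ ^ 2 * lam₃ + lam₁ * lam₂ * lam₃ ^ 2) * c2
        have hy0 : y = 0 := by
          refine mul_left_cancel₀ hdet ?_
          linear_combination (-lam₁ ^ 3 * lam₂ ^ 3 * lam₃ + (-2) * lam₁ ^ 3 * lam₂ ^ 2 * lam₃ ^ 2 - lam₁ ^ 3 * lam₂ * lam₃ ^ 3 + lam₁ ^ 2 * lam₂ ^ 3 * lam₃ ^ 2 + lam₁ ^ 2 * lam₂ ^ 2 * lam₃ ^ 3 - lam₁ * lam₂ ^ 4 * lam₃ ^ 2 + (-2) * lam₁ * lam₂ ^ 3 * lam₃ ^ 3 - lam₁ * lam₂ ^ 2 * lam₃ ^ 4 + lam₂ ^ 4 * lam₃ ^ 3 + lam₂ ^ 3 * lam₃ ^ 4) * c0 +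
              (-lam₁ ^ 4 * lam₂ * lam₃ + 2 * lam₁ ^ 3 * lam₂ ^ 2 * lam₃ + 2 * lam₁ ^ 3 * lam₂ * lam₃ ^ 2 + (-2) * lam₁ ^ 2 * lam₂ ^ 2 * lam₃ ^ 2 + 2 * lam₁ * lam₂ ^ 3 * lam₃ ^ 2 + 2 * lam₁ * lam₂ ^ 2 * lam₃ ^ 3 - lam₂ ^ 3 * lam₃ ^ 3) * c1 + (lam₁ ^ 4 * lam₂ + lam₁ ^ 4 * lam₃ - lam₁ ^ 3 * lam₂ ^ 2 + (-2) * lam₁ ^ 3 * lam₂ * lam₃ - lam₁ ^ 3 * lam₃ ^ 2 + lam₁ ^ 2 * lam₂ ^ 2 * lam₃ + lam₁ ^ 2 * lam₂ * lam₃ ^ 2 - lam₁ * lam₂ ^ 3 * lam₃ + (-2) * lam₁ * lam₂ ^ 2 * lam₃ ^ 2 - lam₁ * lam₂ * lam₃ ^ 3) * c2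
        have hz0 : z = 0 := by
          refine mul_left_cancel₀ hdet ?_
          linear_combination (lam₁ ^ 2 * lam₂ ^ 2 * lam₃ ^ 2 + lam₁ ^ 2 * lam₂ * lam₃ ^ 3 + lam₂ ^ 3 * lam₃ ^ 3 + lam₂ ^ 2 * lam₃ ^ 4) * c0 +
              (lam₁ ^ 3 * lam₂ * lam₃ - lam₁ ^ 2 * lam₂ * lam₃ ^ 2 + lam₁ * lam₂ ^ 2 * lam₃ ^ 2 - lam₂ ^ 2 * lam₃ ^ 3) * c1 + (-lam₁ ^ 3 * lam₃ + lam₁ ^ 2 * lam₃ ^ 2 - lam₁ * lam₂ * lam₃ ^ 2 + lam₂ * lam₃ ^ 3) * c2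
        rw [hveq, hx0, hy0, hz0]
        funext i
        fin_cases i <;> rfl
      · exact htop _ c2 w2
    · exact htop _ c1 w1
  · exact htop _ c0 w0
end

section
/- In any group where s₁, s₂ satisfy the braid relation s₁s₂s₁ = s₂s₁s₂, one has the identity s₂s₁³s₂²s₁²s₂² = s₂s₁²s₂⁻³s₁²s₂²s₁²s₂s₁³, used in the analysis of the quintic Hecke algebra (Lemma 4.5). -/
private def ev {G : Type*} [Group G] (s₁ s₂ : G) : List Bool → G
  | [] => 1
  | true :: l => s₁ * ev s₁ s₂ l
  | false :: l => s₂ * ev s₁ s₂ l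

private lemma ev_append {G : Type*} [Group G] (s₁ s₂ : G) (u v : List Bool) :
    ev s₁ s₂ (u ++ v) = ev s₁ s₂ u * ev s₁ s₂ v := by
  induction u with
  | nil => simp [ev]
  | cons b l ih => cases b <;> simp [ev, ih, mul_assoc]

private lemma move1 {G : Type*} [Group G] (s₁ s₂ : G) (h : s₁ * s₂ * s₁ = s₂ * s₁ * s₂)
    (u v : List Bool) :
    ev s₁ s₂ (u ++ [true, false, true] ++ v) = ev s₁ s₂ (u ++ [false, true, false] ++ v) := by
  have mid : ev s₁ s₂ [true, false, true] = ev s₁ s₂ [false, true, false] := by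
    simp only [ev, mul_one]
    rw [← mul_assoc, h, mul_assoc]
  simp only [ev_append, mid]

private lemma move2 {G : Type*} [Group G] (s₁ s₂ : G) (h : s₁ * s₂ * s₁ = s₂ * s₁ * s₂)
    (u v : List Bool) :
    ev s₁ s₂ (u ++ [false, true, false] ++ v) = ev s₁ s₂ (u ++ [true, false, true] ++ v) :=
  (move1 s₁ s₂ h u v).symm

theorem braid_identity19 {G : Type*} [Group G] (s₁ s₂ : G)
    (h : s₁ * s₂ * s₁ = s₂ * s₁ * s₂) :
    s₂ * s₁ ^ 3 * s₂ ^ 2 * s₁ ^ 2 * s₂ ^ 2 =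
      s₂ * s₁ ^ 2 * s₂ ^ (-3 : ℤ) * s₁ ^ 2 * s₂ ^ 2 * s₁ ^ 2 * s₂ * s₁ ^ 3 := by
  have main : ev s₁ s₂ [false, false, false, true, false, false, true, true, false, false] =
      ev s₁ s₂ [true, true, false, false, true, true, false, true, true, true] := by
    calc ev s₁ s₂ [false, false, false, true, false, false, true, true, false, false]
      _ = ev s₁ s₂ [false, false, true, false, true, false, true, true, false, false] := by simpa using move2 s₁ s₂ h [false, false] [false, true, true, false, false]
      _ = ev s₁ s₂ [false, true, false, true, true, false, true, true, false, false] := by simpa using move2 s₁ s₂ h [false] [true, false, true, true, false, false]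
      _ = ev s₁ s₂ [true, false, true, true, true, false, true, true, false, false] := by simpa using move2 s₁ s₂ h [] [true, true, false, true, true, false, false]
      _ = ev s₁ s₂ [true, false, true, true, false, true, false, true, false, false] := by simpa using move1 s₁ s₂ h [true, false, true, true] [true, false, false]
      _ = ev s₁ s₂ [true, false, true, false, true, false, false, true, false, false] := by simpa using move1 s₁ s₂ h [true, false, true] [false, true, false, false]
      _ = ev s₁ s₂ [true, true, false, true, true, false, false, true, false, false] := by simpa using move2 s₁ s₂ h [true] [true, false, false, true, false, false]
      _ = ev s₁ s₂ [true, true, false, true, true, false, true, false, true, false] := by simpa using move2 s₁ s₂ h [true, true, false, true, true, false] [false]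
      _ = ev s₁ s₂ [true, true, false, true, false, true, false, false, true, false] := by simpa using move1 s₁ s₂ h [true, true, false, true] [false, true, false]
      _ = ev s₁ s₂ [true, true, false, false, true, false, false, false, true, false] := by simpa using move1 s₁ s₂ h [true, true, false] [false, false, true, false]
      _ = ev s₁ s₂ [true, true, false, false, true, false, false, true, false, true] := by simpa using move2 s₁ s₂ h [true, true, false, false, true, false, false] []
      _ = ev s₁ s₂ [true, true, false, false, true, false, true, false, true, true] := by simpa using move2 s₁ s₂ h [true, true, false, false, true, false] [true]
      _ = ev s₁ s₂ [true, true, false, false, true, true, false, true, true, true] := by simpa using move2 s₁ s₂ h [true, true, false, false, true] [true, true]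
  have key2 : s₁ ^ 2 * s₂ ^ 2 * s₁ ^ 2 * s₂ * s₁ ^ 3 = s₂ ^ 3 * s₁ * s₂ ^ 2 * s₁ ^ 2 * s₂ ^ 2 := by
    have := main.symm
    simp only [ev, mul_one] at this
    simp only [pow_succ, pow_zero, one_mul, pow_one]
    simpa [mul_assoc] using this
  have step : s₂ * s₁ ^ 2 * s₂ ^ (-3 : ℤ) * s₁ ^ 2 * s₂ ^ 2 * s₁ ^ 2 * s₂ * s₁ ^ 3 =
      s₂ * s₁ ^ 2 * s₂ ^ (-3 : ℤ) * (s₁ ^ 2 * s₂ ^ 2 * s₁ ^ 2 * s₂ * s₁ ^ 3) := by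
    group
  rw [step, key2]
  group
end
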